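/- Let g_Θ(x) := W^L f^L[⋯ W^1 f^1[W^0 x]] be a feed-forward network with L hidden layers where each activation f^l is a_Lip-Lipschitz with f^l(0)=0. For parameter tuples Θ = (W^L,…,W^0) and Γ = (V^L,…,V^0) in the set A_h (so that Σ_j ‖W^j‖₁ ≤ M + 1/ν and likewise for Γ), it holds that ‖g_Θ − g_Γ‖_n ≤ 2 a_Lip^L √L ‖x‖_n ( (2/L)(M + 1/ν) )^L ‖Θ − Γ‖_F, where ‖g‖_n² := (1/n)Σ_{i=1}^n ‖g(x_i)‖² and ‖Θ−Γ‖_F is the Frobenius norm of the stacked parameter difference. -/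

import Mathlib

/-- Euclidean norm of a finite real vector. -/
noncomputable def e2 {m : Type*} [Fintype m] (v : m → ℝ) : ℝ :=
  Real.sqrt (∑ i, (v i) ^ 2)

/-- The entrywise `ℓ₁`-norm of a matrix. -/
noncomputable def ent1 {m n : Type*} [Fintype m] [Fintype n] (A : Matrix m n ℝ) : ℝ :=
  ∑ i, ∑ j, |A i j|

/-- The `ℓ₁→ℓ₁` induced operator norm of a matrix. -/
noncomputable def op11 {m n : Type*} [Fintype m] [Fintype n] (B : Matrix m n ℝ) : ℝ :=
  sSup {r : ℝ | ∃ x : n → ℝ, x ≠ 0 ∧ r = (∑ i, |B.mulVec x i|) / (∑ j, |x j|)}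

/-- The feed-forward network `net k x = W^{k-1} f^{k-1} [⋯ W^1 f^1 [W^0 (f^0 x)]]`;
with `f^0 = id` and `k = L+1` this is `g_Θ(x) = W^L f^L[⋯ W^1 f^1[W^0 x]]`. -/
def netFun (p : ℕ → ℕ) (W : ∀ l : ℕ, Matrix (Fin (p (l + 1))) (Fin (p l)) ℝ)
    (f : ∀ l : ℕ, (Fin (p l) → ℝ) → (Fin (p l) → ℝ)) :
    (k : ℕ) → (Fin (p 0) → ℝ) → (Fin (p k) → ℝ)
  | 0, x => x
  | (k + 1), x => (W k).mulVec (f k (netFun p W f k x))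

/-!
On the unit ball of `h`, writing `W = Π W + H (G W)` (from `H G = 1 - Π`) gives
`Σ_l ‖W^l‖₁ ≤ ‖Π Θ‖₁ + M ‖G Θ‖₁ ≤ M + 1/ν`, and likewise for `Γ`. Peeling off the last layer,
`W f(z) - V f(z') = W (f z - f z') + (W - V) f z'`, so by induction `‖g_Θ(x) - g_Γ(x)‖` is at most
`a_Lip^L ‖x‖ Σ_l (∏_{j ≠ l} c_j) ‖W^l - V^l‖_F` with `c_j = ‖W^j‖₁ + ‖V^j‖₁ ≥ ‖W^j‖₂ ∨ ‖V^j‖₂`.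
Since `Σ_j c_j ≤ 2 (M + 1/ν)`, AM–GM bounds each product of `L` factors by `((2/L)(M + 1/ν))^L`,
and Cauchy–Schwarz gives `Σ_l ‖W^l - V^l‖_F ≤ √(L+1) ‖Θ - Γ‖_F ≤ 2 √L ‖Θ - Γ‖_F`.
-/

open Finset
open scoped Matrix

noncomputable def frob {m n : Type*} [Fintype m] [Fintype n] (A : Matrix m n ℝ) : ℝ :=
  √(∑ i, ∑ j, A i j ^ 2)

section MatrixNorms

variable {m n : Type*} [Fintype m] [Fintype n]

lemma e2_nonneg (v : m → ℝ) : 0 ≤ e2 v := Real.sqrt_nonneg _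

lemma e2_add_le (u v : m → ℝ) : e2 (u + v) ≤ e2 u + e2 v := by
  have h (w : m → ℝ) : e2 w = ‖(WithLp.toLp 2 w : EuclideanSpace ℝ m)‖ := by
    simp [e2, EuclideanSpace.norm_eq]
  simpa only [h, WithLp.toLp_add] using norm_add_le _ _

lemma ent1_nonneg (A : Matrix m n ℝ) : 0 ≤ ent1 A :=
  sum_nonneg fun _ _ => sum_nonneg fun _ _ => abs_nonneg _

lemma frob_nonneg (A : Matrix m n ℝ) : 0 ≤ frob A := Real.sqrt_nonneg _

lemma frob_sq (A : Matrix m n ℝ) : frob A ^ 2 = ∑ i, ∑ j, A i j ^ 2 :=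
  Real.sq_sqrt (sum_nonneg fun _ _ => sum_nonneg fun _ _ => sq_nonneg _)

lemma frob_le_ent1 (A : Matrix m n ℝ) : frob A ≤ ent1 A := by
  refine Real.sqrt_le_iff.mpr ⟨ent1_nonneg A, ?_⟩
  calc ∑ i, ∑ j, A i j ^ 2 = ∑ i, ∑ j, |A i j| ^ 2 := by simp only [sq_abs]
    _ ≤ ∑ i, (∑ j, |A i j|) ^ 2 :=
      sum_le_sum fun i _ => sum_sq_le_sq_sum_of_nonneg fun j _ => abs_nonneg _
    _ ≤ ent1 A ^ 2 := sum_sq_le_sq_sum_of_nonneg fun i _ => sum_nonneg fun j _ => abs_nonneg _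

lemma e2_mulVec_le_frob (A : Matrix m n ℝ) (v : n → ℝ) : e2 (A *ᵥ v) ≤ frob A * e2 v :=
  calc e2 (A *ᵥ v) ≤ √((∑ i, ∑ j, A i j ^ 2) * ∑ j, v j ^ 2) := by
        rw [sum_mul]
        exact Real.sqrt_le_sqrt (sum_le_sum fun i _ => sum_mul_sq_le_sq_mul_sq _ _ _)
    _ = frob A * e2 v := Real.sqrt_mul (sum_nonneg fun _ _ => sum_nonneg fun _ _ => sq_nonneg _) _

lemma e2_mulVec_le_ent1 (A : Matrix m n ℝ) (v : n → ℝ) : e2 (A *ᵥ v) ≤ ent1 A * e2 v :=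
  (e2_mulVec_le_frob A v).trans (mul_le_mul_of_nonneg_right (frob_le_ent1 A) (e2_nonneg v))

-- Crude, but enough to make the supremum defining `op11` bounded above.
lemma sum_abs_mulVec_le_ent1_mul (B : Matrix m n ℝ) (v : n → ℝ) :
    ∑ i, |(B *ᵥ v) i| ≤ ent1 B * ∑ j, |v j| :=
  calc ∑ i, |(B *ᵥ v) i| ≤ ∑ i, ∑ j, |B i j| * |v j| :=
        sum_le_sum fun i _ => (abs_sum_le_sum_abs _ _).trans_eq (by simp only [abs_mul])
    _ ≤ ∑ i, ∑ j, |B i j| * ∑ k, |v k| := by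
        gcongr with i _ j _
        exact single_le_sum (fun k _ => abs_nonneg (v k)) (mem_univ j)
    _ = ent1 B * ∑ j, |v j| := by simp only [ent1, sum_mul]

lemma op11_nonneg (B : Matrix m n ℝ) : 0 ≤ op11 B :=
  Real.sSup_nonneg fun _ ⟨_, _, hr⟩ =>
    hr ▸ div_nonneg (sum_nonneg fun _ _ => abs_nonneg _) (sum_nonneg fun _ _ => abs_nonneg _)

lemma sum_abs_mulVec_le_op11_mul (B : Matrix m n ℝ) (v : n → ℝ) :
    ∑ i, |(B *ᵥ v) i| ≤ op11 B * ∑ j, |v j| := by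
  rcases eq_or_ne v 0 with rfl | hv
  · simp
  have hpos : 0 < ∑ j, |v j| := by
    obtain ⟨j, hj⟩ := Function.ne_iff.mp hv
    exact sum_pos' (fun k _ => abs_nonneg (v k)) ⟨j, mem_univ j, abs_pos.mpr hj⟩
  have hbdd : BddAbove {r : ℝ | ∃ y : n → ℝ, y ≠ 0 ∧ r = (∑ i, |(B *ᵥ y) i|) / (∑ j, |y j|)} :=
    ⟨ent1 B, fun _ ⟨y, _, hr⟩ => hr ▸ div_le_of_le_mul₀ (sum_nonneg fun _ _ => abs_nonneg _)
      (ent1_nonneg B) (sum_abs_mulVec_le_ent1_mul B y)⟩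
  exact (div_le_iff₀ hpos).mp (le_csSup hbdd ⟨v, hv, rfl⟩)

lemma ent1_mul_le {k : Type*} [Fintype k] (B : Matrix m n ℝ) (A : Matrix n k ℝ) :
    ent1 (B * A) ≤ op11 B * ent1 A := by
  have hcol (j : k) : ∑ i, |(B * A) i j| ≤ op11 B * ∑ i, |A i j| :=
    sum_abs_mulVec_le_op11_mul B (fun i => A i j)
  calc ent1 (B * A) = ∑ j, ∑ i, |(B * A) i j| := sum_comm
    _ ≤ ∑ j, op11 B * ∑ i, |A i j| := sum_le_sum fun j _ => hcol j
    _ = op11 B * ent1 A := by rw [← mul_sum, ent1, sum_comm]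

lemma ent1_add_le (A B : Matrix m n ℝ) : ent1 (A + B) ≤ ent1 A + ent1 B := by
  simp only [ent1, ← sum_add_distrib]
  exact sum_le_sum fun i _ => sum_le_sum fun j _ => abs_add_le _ _

end MatrixNorms

lemma ent1_le_of_mul_eq_one_sub {m k r : Type*} [Fintype m] [DecidableEq m] [Fintype k]
    [Fintype r] {G : Matrix k m ℝ} {P : Matrix m m ℝ} {H : Matrix m k ℝ} (hHG : H * G = 1 - P)
    (U : Matrix m r ℝ) : ent1 U ≤ ent1 (P * U) + op11 H * ent1 (G * U) := by
  have hsplit : U = P * U + H * (G * U) := by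
    rw [← Matrix.mul_assoc, hHG, Matrix.sub_mul, Matrix.one_mul, add_sub_cancel]
  calc ent1 U = ent1 (P * U + H * (G * U)) := congrArg ent1 hsplit
    _ ≤ ent1 (P * U) + ent1 (H * (G * U)) := ent1_add_le _ _
    _ ≤ ent1 (P * U) + op11 H * ent1 (G * U) := add_le_add_right (ent1_mul_le _ _) _

lemma sum_ent1_le_of_regularizer_le {ι : Type*} [Fintype ι] {a b c : ι → ℕ}
    {G : ∀ l, Matrix (Fin (c l)) (Fin (a l)) ℝ} {P : ∀ l, Matrix (Fin (a l)) (Fin (a l)) ℝ}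
    {H : ∀ l, Matrix (Fin (a l)) (Fin (c l)) ℝ} (hHG : ∀ l, H l * G l = 1 - P l)
    {ν M : ℝ} (hν : 0 < ν) (hM0 : 0 ≤ M) (hHM : ∀ l, op11 (H l) ≤ M)
    {U : ∀ l, Matrix (Fin (a l)) (Fin (b l)) ℝ}
    (hU : (∑ l, ent1 (G l * U l)) + ν * ∑ l, ent1 (P l * U l) ≤ 1) :
    ∑ l, ent1 (U l) ≤ M + 1 / ν := by
  have hG : ∑ l, ent1 (G l * U l) ≤ 1 := by
    have : 0 ≤ ν * ∑ l, ent1 (P l * U l) :=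
      mul_nonneg hν.le (sum_nonneg fun l _ => ent1_nonneg _)
    linarith
  have hP : ∑ l, ent1 (P l * U l) ≤ 1 / ν := by
    rw [le_div_iff₀ hν]
    have : 0 ≤ ∑ l, ent1 (G l * U l) := sum_nonneg fun l _ => ent1_nonneg _
    linarith
  calc ∑ l, ent1 (U l) ≤ ∑ l, (ent1 (P l * U l) + M * ent1 (G l * U l)) :=
        sum_le_sum fun l _ => (ent1_le_of_mul_eq_one_sub (hHG l) (U l)).trans
          (add_le_add_right (mul_le_mul_of_nonneg_right (hHM l) (ent1_nonneg _)) _)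
    _ = (∑ l, ent1 (P l * U l)) + M * ∑ l, ent1 (G l * U l) := by
        rw [sum_add_distrib, mul_sum]
    _ ≤ 1 / ν + M * 1 := add_le_add hP (mul_le_mul_of_nonneg_left hG hM0)
    _ = M + 1 / ν := by ring

lemma sum_prod_erase_range_succ {R : Type*} [CommSemiring R] (c F : ℕ → R) (k : ℕ) :
    ∑ l ∈ range (k + 1), (∏ j ∈ (range (k + 1)).erase l, c j) * F l
      = c k * ∑ l ∈ range k, (∏ j ∈ (range k).erase l, c j) * F l
        + (∏ j ∈ range k, c j) * F k := by
  have herase (l : ℕ) (hl : l ∈ range k) :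
      (range (k + 1)).erase l = insert k ((range k).erase l) := by
    rw [range_add_one, erase_insert_of_ne (by simp at hl; omega)]
  rw [sum_range_succ, range_add_one, erase_insert notMem_range_self, ← range_add_one, mul_sum]
  congr 1
  refine sum_congr rfl fun l hl => ?_
  rw [herase l hl, prod_insert (fun h => notMem_range_self (mem_of_mem_erase h)), mul_assoc]

section Network

variable {p : ℕ → ℕ} {f : ∀ l : ℕ, (Fin (p l) → ℝ) → (Fin (p l) → ℝ)} {aLip : ℝ}

lemma e2_netFun_le (V : ∀ l : ℕ, Matrix (Fin (p (l + 1))) (Fin (p l)) ℝ) (haLip : 0 ≤ aLip)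
    (hf0 : f 0 = id)
    (hfLip : ∀ l (z z' : Fin (p l) → ℝ), e2 (f l z - f l z') ≤ aLip * e2 (z - z'))
    (hfzero : ∀ l, f l 0 = 0) {c : ℕ → ℝ} (hV : ∀ j, ent1 (V j) ≤ c j) (k : ℕ)
    (x : Fin (p 0) → ℝ) :
    e2 (netFun p V f (k + 1) x) ≤ aLip ^ k * (∏ j ∈ range (k + 1), c j) * e2 x := by
  induction k with
  | zero => simpa [netFun, hf0] using
      (e2_mulVec_le_ent1 (V 0) x).trans (mul_le_mul_of_nonneg_right (hV 0) (e2_nonneg x))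
  | succ k ih =>
    have hc : 0 ≤ c (k + 1) := (ent1_nonneg _).trans (hV _)
    have hf :
        e2 (f (k + 1) (netFun p V f (k + 1) x)) ≤ aLip * e2 (netFun p V f (k + 1) x) := by
      simpa [hfzero] using hfLip (k + 1) (netFun p V f (k + 1) x) 0
    calc e2 (netFun p V f (k + 2) x)
        ≤ c (k + 1) * e2 (f (k + 1) (netFun p V f (k + 1) x)) :=
          (e2_mulVec_le_ent1 _ _).trans (mul_le_mul_of_nonneg_right (hV _) (e2_nonneg _))
      _ ≤ c (k + 1) * (aLip * (aLip ^ k * (∏ j ∈ range (k + 1), c j) * e2 x)) := by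
          gcongr
          exact hf.trans (by gcongr)
      _ = aLip ^ (k + 1) * (∏ j ∈ range (k + 2), c j) * e2 x := by
          rw [prod_range_succ _ (k + 1)]; ring

lemma e2_netFun_sub_le (W V : ∀ l : ℕ, Matrix (Fin (p (l + 1))) (Fin (p l)) ℝ)
    (haLip : 0 ≤ aLip) (hf0 : f 0 = id)
    (hfLip : ∀ l (z z' : Fin (p l) → ℝ), e2 (f l z - f l z') ≤ aLip * e2 (z - z'))
    (hfzero : ∀ l, f l 0 = 0) {c : ℕ → ℝ} (hW : ∀ j, ent1 (W j) ≤ c j)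
    (hV : ∀ j, ent1 (V j) ≤ c j) (k : ℕ) (x : Fin (p 0) → ℝ) :
    e2 (netFun p W f (k + 1) x - netFun p V f (k + 1) x)
      ≤ aLip ^ k * (∑ l ∈ range (k + 1),
          (∏ j ∈ (range (k + 1)).erase l, c j) * frob (W l - V l)) * e2 x := by
  induction k with
  | zero => simpa [netFun, hf0, ← Matrix.sub_mulVec] using e2_mulVec_le_frob (W 0 - V 0) x
  | succ k ih =>
    set zW := netFun p W f (k + 1) x
    set zV := netFun p V f (k + 1) x
    have hc : 0 ≤ c (k + 1) := (ent1_nonneg _).trans (hW _)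
    have hsplit : netFun p W f (k + 2) x - netFun p V f (k + 2) x
        = W (k + 1) *ᵥ (f (k + 1) zW - f (k + 1) zV)
          + (W (k + 1) - V (k + 1)) *ᵥ f (k + 1) zV := by
      simp only [netFun, Matrix.mulVec_sub, Matrix.sub_mulVec, zW, zV]
      abel
    have hfV : e2 (f (k + 1) zV) ≤ aLip * e2 zV := by simpa [hfzero] using hfLip (k + 1) zV 0
    have hsize := e2_netFun_le V haLip hf0 hfLip hfzero hV k x
    calc e2 (netFun p W f (k + 2) x - netFun p V f (k + 2) x)
        ≤ c (k + 1) * (aLip * e2 (zW - zV))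
          + frob (W (k + 1) - V (k + 1)) * (aLip * e2 zV) := by
          rw [hsplit]
          refine (e2_add_le _ _).trans (add_le_add ?_ ?_)
          · exact (e2_mulVec_le_ent1 _ _).trans (mul_le_mul (hW _) (hfLip _ _ _)
              (e2_nonneg _) hc)
          · exact (e2_mulVec_le_frob _ _).trans (mul_le_mul_of_nonneg_left hfV (frob_nonneg _))
      _ ≤ c (k + 1) * (aLip * (aLip ^ k * (∑ l ∈ range (k + 1),
            (∏ j ∈ (range (k + 1)).erase l, c j) * frob (W l - V l)) * e2 x))
          + frob (W (k + 1) - V (k + 1))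
            * (aLip * (aLip ^ k * (∏ j ∈ range (k + 1), c j) * e2 x)) := by
          gcongr
          exact frob_nonneg _
      _ = aLip ^ (k + 1) * (∑ l ∈ range (k + 2),
            (∏ j ∈ (range (k + 2)).erase l, c j) * frob (W l - V l)) * e2 x := by
          rw [sum_prod_erase_range_succ c _ (k + 1)]; ring

end Network

lemma prod_le_pow_of_sum_le {ι : Type*} {s : Finset ι} (hs : s.Nonempty) {c : ι → ℝ} {B : ℝ}
    (hc : ∀ i ∈ s, 0 ≤ c i) (hB : ∑ i ∈ s, c i ≤ B) : ∏ i ∈ s, c i ≤ (B / #s) ^ #s := by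
  have hcard : (#s : ℝ) ≠ 0 := Nat.cast_ne_zero.mpr hs.card_pos.ne'
  have hamgm := Real.geom_mean_le_arith_mean_weighted s (fun _ => (#s : ℝ)⁻¹) c
    (fun _ _ => by positivity) (by rw [sum_const, nsmul_eq_mul, mul_inv_cancel₀ hcard]) hc
  have hpow : (∏ i ∈ s, c i ^ (#s : ℝ)⁻¹) ^ #s = ∏ i ∈ s, c i := by
    rw [← prod_pow]
    refine prod_congr rfl fun i hi => ?_
    rw [← Real.rpow_natCast, ← Real.rpow_mul (hc i hi), inv_mul_cancel₀ hcard, Real.rpow_one]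
  calc ∏ i ∈ s, c i = (∏ i ∈ s, c i ^ (#s : ℝ)⁻¹) ^ #s := hpow.symm
    _ ≤ (∑ i ∈ s, (#s : ℝ)⁻¹ * c i) ^ #s :=
        pow_le_pow_left₀ (prod_nonneg fun i hi => Real.rpow_nonneg (hc i hi) _) hamgm _
    _ ≤ (B / #s) ^ #s := by
        rw [← mul_sum, inv_mul_eq_div]
        gcongr
        exact div_nonneg (sum_nonneg hc) (Nat.cast_nonneg _)

lemma prod_erase_range_le_pow {c : ℕ → ℝ} {B : ℝ} {L l : ℕ} (hL : 0 < L) (hc : ∀ j, 0 ≤ c j)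
    (hB : ∑ j ∈ range (L + 1), c j ≤ B) (hl : l ∈ range (L + 1)) :
    ∏ j ∈ (range (L + 1)).erase l, c j ≤ (B / L) ^ L := by
  have hcard : #((range (L + 1)).erase l) = L := by simp [card_erase_of_mem hl]
  calc ∏ j ∈ (range (L + 1)).erase l, c j
      ≤ (B / #((range (L + 1)).erase l)) ^ #((range (L + 1)).erase l) :=
        prod_le_pow_of_sum_le (card_pos.mp (by rw [hcard]; exact hL)) (fun j _ => hc j)
          ((sum_le_sum_of_subset_of_nonneg (erase_subset _ _) fun j _ _ => hc j).trans hB)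
    _ = (B / L) ^ L := by rw [hcard]

lemma sum_le_sqrt_card_mul_sqrt_sum_sq {ι : Type*} (s : Finset ι) (F : ι → ℝ) :
    ∑ i ∈ s, F i ≤ √(#s : ℝ) * √(∑ i ∈ s, F i ^ 2) := by
  rw [← Real.sqrt_mul (Nat.cast_nonneg _)]
  exact (le_abs_self _).trans (Real.abs_le_sqrt sq_sum_le_card_mul_sum_sq)

lemma sum_frob_sub_le {p : ℕ → ℕ} (W V : ∀ l : ℕ, Matrix (Fin (p (l + 1))) (Fin (p l)) ℝ)
    {L : ℕ} (hL : 0 < L) :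
    ∑ l ∈ range (L + 1), frob (W l - V l)
      ≤ 2 * √L * √(∑ l : Fin (L + 1), ∑ i, ∑ j, (W l.val i j - V l.val i j) ^ 2) := by
  have hsq : ∑ l ∈ range (L + 1), frob (W l - V l) ^ 2
      = ∑ l : Fin (L + 1), ∑ i, ∑ j, (W l.val i j - V l.val i j) ^ 2 := by
    simp only [frob_sq, Matrix.sub_apply]
    exact (Fin.sum_univ_eq_sum_range (fun l => ∑ i, ∑ j, (W l i j - V l i j) ^ 2) _).symm
  have hcard : √((L : ℝ) + 1) ≤ 2 * √L := by
    rw [show (2 : ℝ) = √4 by norm_num, ← Real.sqrt_mul (by norm_num)]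
    exact Real.sqrt_le_sqrt (by linarith [(Nat.one_le_cast (α := ℝ)).mpr hL])
  calc ∑ l ∈ range (L + 1), frob (W l - V l)
      ≤ √((L : ℝ) + 1) * √(∑ l : Fin (L + 1), ∑ i, ∑ j, (W l.val i j - V l.val i j) ^ 2) := by
        simpa [hsq] using sum_le_sqrt_card_mul_sqrt_sum_sq (range (L + 1)) fun l => frob (W l - V l)
    _ ≤ _ := by gcongr

lemma sum_prod_erase_mul_frob_sub_le {p : ℕ → ℕ}
    (W V : ∀ l : ℕ, Matrix (Fin (p (l + 1))) (Fin (p l)) ℝ) {c : ℕ → ℝ} {B : ℝ} {L : ℕ}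
    (hL : 0 < L) (hc : ∀ j, 0 ≤ c j) (hB : ∑ j ∈ range (L + 1), c j ≤ B) :
    ∑ l ∈ range (L + 1), (∏ j ∈ (range (L + 1)).erase l, c j) * frob (W l - V l)
      ≤ (B / L) ^ L
        * (2 * √L * √(∑ l : Fin (L + 1), ∑ i, ∑ j, (W l.val i j - V l.val i j) ^ 2)) := by
  have hB0 : 0 ≤ B := (sum_nonneg fun j _ => hc j).trans hB
  calc ∑ l ∈ range (L + 1), (∏ j ∈ (range (L + 1)).erase l, c j) * frob (W l - V l)
      ≤ ∑ l ∈ range (L + 1), (B / L) ^ L * frob (W l - V l) := by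
        gcongr with l hl
        · exact frob_nonneg _
        · exact prod_erase_range_le_pow hL hc hB hl
    _ ≤ _ := by
        rw [← mul_sum]
        exact mul_le_mul_of_nonneg_left (sum_frob_sub_le W V hL) (by positivity)

lemma sqrt_mul_sum_sq_le_of_le_mul {ι : Type*} [Fintype ι] {a b : ι → ℝ} {t K : ℝ}
    (ht : 0 ≤ t) (hK : 0 ≤ K) (ha : ∀ i, 0 ≤ a i) (hab : ∀ i, a i ≤ K * b i) :
    √(t * ∑ i, a i ^ 2) ≤ K * √(t * ∑ i, b i ^ 2) := by
  rw [← Real.sqrt_sq hK, ← Real.sqrt_mul (sq_nonneg K)]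
  refine Real.sqrt_le_sqrt ?_
  calc t * ∑ i, a i ^ 2 ≤ t * ∑ i, (K * b i) ^ 2 := by
        gcongr with i
        exacts [ha i, hab i]
    _ = K ^ 2 * (t * ∑ i, b i ^ 2) := by simp only [mul_pow, ← mul_sum]; ring

theorem stmt9_general (L : ℕ) (hL : 0 < L) (p q : ℕ → ℕ)
    (W V : ∀ l : ℕ, Matrix (Fin (p (l + 1))) (Fin (p l)) ℝ)
    (f : ∀ l : ℕ, (Fin (p l) → ℝ) → (Fin (p l) → ℝ))
    (aLip : ℝ) (haLip : 0 ≤ aLip)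
    (hf0 : f 0 = id)
    (hfLip : ∀ l (z z' : Fin (p l) → ℝ), e2 (f l z - f l z') ≤ aLip * e2 (z - z'))
    (hfzero : ∀ l, f l 0 = 0)
    (G : ∀ l : Fin (L + 1), Matrix (Fin (q l.val)) (Fin (p (l.val + 1))) ℝ)
    (P : ∀ l : Fin (L + 1), Matrix (Fin (p (l.val + 1))) (Fin (p (l.val + 1))) ℝ)
    (H : ∀ l : Fin (L + 1), Matrix (Fin (p (l.val + 1))) (Fin (q l.val)) ℝ)
    (hHG : ∀ l, H l * G l = 1 - P l)
    (ν M : ℝ) (hν : 0 < ν)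
    (hM : M = ⨆ l : Fin (L + 1), op11 (H l))
    (hΘ : (∑ l : Fin (L + 1), ent1 (G l * W l.val))
        + ν * ∑ l : Fin (L + 1), ent1 (P l * W l.val) ≤ 1)
    (hΓ : (∑ l : Fin (L + 1), ent1 (G l * V l.val))
        + ν * ∑ l : Fin (L + 1), ent1 (P l * V l.val) ≤ 1)
    (n : ℕ) (x : Fin n → (Fin (p 0) → ℝ)) :
    Real.sqrt ((1 / (n : ℝ)) *
        ∑ i, (e2 (netFun p W f (L + 1) (x i) - netFun p V f (L + 1) (x i))) ^ 2)
      ≤ 2 * aLip ^ L * Real.sqrt (L : ℝ)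
        * Real.sqrt ((1 / (n : ℝ)) * ∑ i, (e2 (x i)) ^ 2)
        * ((2 / (L : ℝ)) * (M + 1 / ν)) ^ L
        * Real.sqrt (∑ l : Fin (L + 1), ∑ i, ∑ j, (W l.val i j - V l.val i j) ^ 2) := by
  set c : ℕ → ℝ := fun j => ent1 (W j) + ent1 (V j)
  set Q := ((2 / (L : ℝ)) * (M + 1 / ν)) ^ L
  set T := ∑ l : Fin (L + 1), ∑ i, ∑ j, (W l.val i j - V l.val i j) ^ 2
  have hHM (l : Fin (L + 1)) : op11 (H l) ≤ M := by
    rw [hM]; exact le_ciSup (f := fun l => op11 (H l)) (Set.finite_range _).bddAbove l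
  have hM0 : 0 ≤ M := (op11_nonneg _).trans (hHM 0)
  have hsum_c : ∑ j ∈ range (L + 1), c j ≤ 2 * (M + 1 / ν) := by
    have hW := sum_ent1_le_of_regularizer_le hHG hν hM0 hHM hΘ
    have hV := sum_ent1_le_of_regularizer_le hHG hν hM0 hHM hΓ
    rw [Fin.sum_univ_eq_sum_range (fun j => ent1 (W j))] at hW
    rw [Fin.sum_univ_eq_sum_range (fun j => ent1 (V j))] at hV
    rw [sum_add_distrib]
    linarith
  have hsample (i : Fin n) : e2 (netFun p W f (L + 1) (x i) - netFun p V f (L + 1) (x i))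
      ≤ aLip ^ L * (Q * (2 * √L * √T)) * e2 (x i) := by
    refine (e2_netFun_sub_le W V haLip hf0 hfLip hfzero (c := c)
      (fun j => le_add_of_nonneg_right (ent1_nonneg _))
      (fun j => le_add_of_nonneg_left (ent1_nonneg _)) L (x i)).trans ?_
    gcongr
    · exact e2_nonneg _
    refine (sum_prod_erase_mul_frob_sub_le W V hL (fun j => add_nonneg (ent1_nonneg _)
      (ent1_nonneg _)) hsum_c).trans_eq ?_
    ring
  calc _ ≤ aLip ^ L * (Q * (2 * √L * √T)) * √((1 / (n : ℝ)) * ∑ i, e2 (x i) ^ 2) :=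
        sqrt_mul_sum_sq_le_of_le_mul (by positivity) (by positivity) (fun i => e2_nonneg _)
          hsample
    _ = _ := by ring

/-- Lipschitz property of networks on the unit ball `A_h` of the
regularizer `h(Θ) = Σ_l ‖G^l W^l‖₁ + ν Σ_l ‖Π_l W^l‖₁`: for `Θ, Γ ∈ A_h`,
`‖g_Θ − g_Γ‖_n ≤ 2 a_Lip^L √L ‖x‖_n ((2/L)(M + 1/ν))^L ‖Θ − Γ‖_F`. -/
theorem stmt9 (L : ℕ) (hL : 0 < L) (p q : ℕ → ℕ)
    (W V : ∀ l : ℕ, Matrix (Fin (p (l + 1))) (Fin (p l)) ℝ)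
    (f : ∀ l : ℕ, (Fin (p l) → ℝ) → (Fin (p l) → ℝ))
    (aLip : ℝ) (haLip : 0 ≤ aLip)
    (hf0 : f 0 = id)
    (hfLip : ∀ l (z z' : Fin (p l) → ℝ), e2 (f l z - f l z') ≤ aLip * e2 (z - z'))
    (hfzero : ∀ l, f l 0 = 0)
    (G : ∀ l : Fin (L + 1), Matrix (Fin (q l.val)) (Fin (p (l.val + 1))) ℝ)
    (P : ∀ l : Fin (L + 1), Matrix (Fin (p (l.val + 1))) (Fin (p (l.val + 1))) ℝ)
    (H : ∀ l : Fin (L + 1), Matrix (Fin (p (l.val + 1))) (Fin (q l.val)) ℝ)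
    (hProj : ∀ l, P l * P l = P l)
    (hGP : ∀ l, G l * P l = 0)
    (hHG : ∀ l, H l * G l = 1 - P l)
    (ν M : ℝ) (hν : 0 < ν)
    (hM : M = ⨆ l : Fin (L + 1), op11 (H l))
    (hΘ : (∑ l : Fin (L + 1), ent1 (G l * W l.val))
        + ν * ∑ l : Fin (L + 1), ent1 (P l * W l.val) ≤ 1)
    (hΓ : (∑ l : Fin (L + 1), ent1 (G l * V l.val))
        + ν * ∑ l : Fin (L + 1), ent1 (P l * V l.val) ≤ 1)
    (n : ℕ) (hn : 0 < n) (x : Fin n → (Fin (p 0) → ℝ)) :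
    Real.sqrt ((1 / (n : ℝ)) *
        ∑ i, (e2 (netFun p W f (L + 1) (x i) - netFun p V f (L + 1) (x i))) ^ 2)
      ≤ 2 * aLip ^ L * Real.sqrt (L : ℝ)
        * Real.sqrt ((1 / (n : ℝ)) * ∑ i, (e2 (x i)) ^ 2)
        * ((2 / (L : ℝ)) * (M + 1 / ν)) ^ L
        * Real.sqrt (∑ l : Fin (L + 1), ∑ i, ∑ j, (W l.val i j - V l.val i j) ^ 2) :=
  stmt9_general L hL p q W V f aLip haLip hf0 hfLip hfzero G P H hHG ν M hν hM hΘ hΓ n x
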